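/- arXiv:hep-th/9607103 — 3 statements merged into one kernel-verified Lean document; each statement's English description precedes it below -/
import Mathlib

section
/- In the associative algebra generated by θ_1,…,θ_N with relations θ_i θ_k θ_l = j θ_k θ_l θ_i (j = e^{2πi/3}), the space spanned by products of exactly three generators has dimension (N^3 − N)/3. -/
/-! STATEMENT 2: In the algebra generated by θ_1,…,θ_N with relations
θ_i θ_k θ_l = j θ_k θ_l θ_i (j = e^{2πi/3}), the space spanned by products of
exactly three generators has dimension (N^3 − N)/3. -/

noncomputable section

/-- `j = e^{2πi/3}`, a primitive cube root of unity. -/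
def jj : ℂ := Complex.exp (2 * Real.pi * Complex.I / 3)

/-- The ternary cyclic relations defining the `ℤ₃`-graded Grassmann algebra on
`N` generators of grade 1. -/
inductive GRel (N : ℕ) : FreeAlgebra ℂ (Fin N) → FreeAlgebra ℂ (Fin N) → Prop
  | ternary (i k l : Fin N) :
      GRel N (FreeAlgebra.ι ℂ i * FreeAlgebra.ι ℂ k * FreeAlgebra.ι ℂ l)
            (jj • (FreeAlgebra.ι ℂ k * FreeAlgebra.ι ℂ l * FreeAlgebra.ι ℂ i))

/-- The `ℤ₃`-graded Grassmann algebra on `N` grade-1 generators. -/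
abbrev GA (N : ℕ) := RingQuot (GRel N)

/-- The generators `θ_i`. -/
def θ (N : ℕ) (i : Fin N) : GA N := RingQuot.mkAlgHom ℂ (GRel N) (FreeAlgebra.ι ℂ i)


lemma jj_prim : IsPrimitiveRoot jj 3 := by
  have h := Complex.isPrimitiveRoot_exp 3 (by norm_num)
  norm_num at h
  exact h

lemma jj_pow3 : jj ^ 3 = 1 := jj_prim.pow_eq_one

lemma jj_ne_one : jj ≠ 1 := jj_prim.ne_one (by norm_num)

namespace Aux

variable {N : ℕ}

abbrev T3 (N : ℕ) := Fin N × Fin N × Fin N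

def cyc (t : T3 N) : T3 N := (t.2.1, t.2.2, t.1)

lemma cyc3 (t : T3 N) : cyc (cyc (cyc t)) = t := rfl

def orbit (t : T3 N) : Finset (T3 N) := {t, cyc t, cyc (cyc t)}

lemma mem_orbit_self (t : T3 N) : t ∈ orbit t := by simp [orbit]

lemma orbit_cyc (t : T3 N) : orbit (cyc t) = orbit t := by
  ext x
  simp only [orbit, Finset.mem_insert, Finset.mem_singleton, cyc3]
  tauto

/-- an orbit-invariant choice of representative -/
def rep (t : T3 N) : T3 N :=
  (Fintype.equivFin (T3 N)).symm
    (((orbit t).image (Fintype.equivFin (T3 N))).min'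
      ⟨_, Finset.mem_image_of_mem _ (mem_orbit_self t)⟩)

lemma rep_cyc (t : T3 N) : rep (cyc t) = rep t := by
  simp only [rep, orbit_cyc]

lemma rep_mem (t : T3 N) : rep t ∈ orbit t := by
  have h := Finset.min'_mem ((orbit t).image (Fintype.equivFin (T3 N)))
    ⟨_, Finset.mem_image_of_mem _ (mem_orbit_self t)⟩
  rw [Finset.mem_image] at h
  obtain ⟨s, hs, he⟩ := h
  simpa [rep, ← he] using hs

def pow3 (t : T3 N) : ℕ := if rep t = t then 0 else if cyc (rep t) = t then 1 else 2

lemma cyc2_ne (t : T3 N) (h : cyc t ≠ t) : cyc (cyc t) ≠ t := by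
  intro he
  exact h (by simpa [cyc3] using (congrArg cyc he).symm)

lemma cyc_ne_cyc2 (t : T3 N) (h : cyc t ≠ t) : cyc (cyc t) ≠ cyc t := by
  intro he
  have : cyc t = t := by
    have := congrArg cyc (congrArg cyc he)
    simpa [cyc3] using this
  exact h this

lemma trichotomy (t : T3 N) (h : cyc t ≠ t) :
    (rep t = t ∧ pow3 t = 0) ∨ (rep t = cyc (cyc t) ∧ pow3 t = 1) ∨
      (rep t = cyc t ∧ pow3 t = 2) := by
  have hm := rep_mem t
  simp only [orbit, Finset.mem_insert, Finset.mem_singleton] at hm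
  rcases hm with h1 | h1 | h1
  · exact Or.inl ⟨h1, by simp [pow3, h1]⟩
  · -- rep t = cyc t
    right; right
    have hne : rep t ≠ t := by rw [h1]; exact h
    have hne2 : cyc (rep t) ≠ t := by
      rw [h1]; exact cyc2_ne t h
    exact ⟨h1, by simp [pow3, hne, hne2]⟩
  · -- rep t = cyc (cyc t)
    right; left
    have hne : rep t ≠ t := by rw [h1]; exact cyc2_ne t h
    have h2 : cyc (rep t) = t := by rw [h1, cyc3]
    exact ⟨h1, by simp [pow3, hne, h2]⟩

lemma pow3_lt (t : T3 N) : pow3 t < 3 := by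
  unfold pow3; split <;> [omega; (split <;> omega)]

lemma cyc_iterate_rep (t : T3 N) (h : cyc t ≠ t) : cyc^[pow3 t] (rep t) = t := by
  rcases trichotomy t h with ⟨h1, h2⟩ | ⟨h1, h2⟩ | ⟨h1, h2⟩ <;> rw [h1, h2] <;>
    simp [Function.iterate_succ, cyc3]

lemma diag_cyc (t : T3 N) (h : cyc t = t) : cyc (cyc t) = cyc t := congrArg cyc h

lemma nondiag_cyc (t : T3 N) (h : cyc t ≠ t) : cyc (cyc t) ≠ cyc t :=
  cyc_ne_cyc2 t h

lemma pow3_cyc (t : T3 N) (h : cyc t ≠ t) : pow3 (cyc t) = (pow3 t + 1) % 3 := by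
  have hrc := rep_cyc t
  rcases trichotomy t h with ⟨h1, h2⟩ | ⟨h1, h2⟩ | ⟨h1, h2⟩ <;>
    rcases trichotomy (cyc t) (nondiag_cyc t h) with ⟨g1, g2⟩ | ⟨g1, g2⟩ | ⟨g1, g2⟩ <;>
      rw [hrc, h1] at g1 <;> rw [h2, g2] <;> first
        | rfl
        | (exfalso; first
            | exact h g1.symm
            | exact h g1
            | exact cyc2_ne t h g1.symm
            | exact cyc2_ne t h g1
            | exact cyc_ne_cyc2 t h g1.symm
            | exact cyc_ne_cyc2 t h g1
            | (apply cyc2_ne t h; have := congrArg cyc g1; simpa [cyc3] using this)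
            | (apply cyc_ne_cyc2 t h; have := congrArg cyc g1; simpa [cyc3] using this)
            | (apply h; have := congrArg cyc g1; simpa [cyc3] using this))


abbrev Rset (N : ℕ) := {r : T3 N // rep r = r ∧ cyc r ≠ r}

def vv (t : T3 N) : Rset N → ℂ :=
  if cyc t = t then 0 else fun r => if r.1 = rep t then jj ^ (3 - pow3 t) else 0

lemma vv_diag (t : T3 N) (h : cyc t = t) : vv t = 0 := by simp [vv, h]

lemma vv_nondiag (t : T3 N) (h : cyc t ≠ t) :
    vv t = fun r => if r.1 = rep t then jj ^ (3 - pow3 t) else 0 := by simp [vv, h]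

lemma rep_rep (t : T3 N) : rep (rep t) = rep t := by
  have hm := rep_mem t
  simp only [orbit, Finset.mem_insert, Finset.mem_singleton] at hm
  rcases hm with h1 | h1 | h1
  · rw [h1]; exact h1
  · rw [h1, rep_cyc]; exact h1
  · rw [h1, rep_cyc, rep_cyc]; exact h1

lemma nondiag_rep (t : T3 N) (h : cyc t ≠ t) : cyc (rep t) ≠ rep t := by
  have hm := rep_mem t
  simp only [orbit, Finset.mem_insert, Finset.mem_singleton] at hm
  rcases hm with h1 | h1 | h1 <;> rw [h1]
  · exact h
  · exact cyc_ne_cyc2 t h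
  · intro he
    have h5 : t = cyc (cyc t) := by simpa [cyc3] using he
    exact cyc2_ne t h h5.symm

lemma vrel (t : T3 N) : vv t = jj • vv (cyc t) := by
  by_cases h : cyc t = t
  · rw [vv_diag t h, vv_diag (cyc t) (by rw [h]; exact h)]; simp
  · have h2 : cyc (cyc t) ≠ cyc t := nondiag_cyc t h
    rw [vv_nondiag t h, vv_nondiag (cyc t) h2]
    funext r
    rw [rep_cyc t, pow3_cyc t h]
    have hpow : pow3 t < 3 := pow3_lt t
    simp only [Pi.smul_apply, smul_eq_mul, mul_ite, mul_zero]
    congr 1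
    interval_cases hp : pow3 t
    · norm_num; ring
    · norm_num; ring
    · norm_num [jj_pow3]

lemma vv_rset (r : Rset N) : vv r.1 = fun r' => if r' = r then 1 else 0 := by
  rw [vv_nondiag r.1 r.2.2]
  funext r'
  have hp : pow3 r.1 = 0 := by simp [pow3, r.2.1]
  rw [hp, r.2.1]
  simp only [Nat.sub_zero]
  by_cases hrr : r' = r
  · rw [if_pos (congrArg Subtype.val hrr), if_pos hrr, jj_pow3]
  · rw [if_neg (fun h => hrr (Subtype.ext h)), if_neg hrr]

/-- the diagonal triples are in bijection with `Fin N` -/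
def diagEquiv : {t : T3 N // cyc t = t} ≃ Fin N where
  toFun t := t.1.1
  invFun i := ⟨(i, i, i), rfl⟩
  left_inv t := by
    obtain ⟨⟨a, b, c⟩, ht⟩ := t
    have h1 : b = a := congrArg Prod.fst ht
    have h2 : c = b := congrArg (fun p => p.2.1) ht
    subst h1; subst h2; rfl
  right_inv i := rfl

lemma cyc_iterate_nondiag (t : T3 N) (h : cyc t ≠ t) (m : ℕ) :
    cyc (cyc^[m] t) ≠ cyc^[m] t := by
  induction m with
  | zero => exact h
  | succ n ih => rw [Function.iterate_succ_apply']; exact nondiag_cyc _ ih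

lemma rep_iterate (t : T3 N) (m : ℕ) : rep (cyc^[m] t) = rep t := by
  induction m with
  | zero => rfl
  | succ n ih => rw [Function.iterate_succ_apply', rep_cyc, ih]

lemma pow3_rset_iterate (r : Rset N) (m : Fin 3) : pow3 (cyc^[m.1] r.1) = m.1 := by
  have h0 : pow3 r.1 = 0 := by simp [pow3, r.2.1]
  have h1 : pow3 (cyc^[1] r.1) = 1 := by
    rw [Function.iterate_one, pow3_cyc r.1 r.2.2, h0]
  have h2 : pow3 (cyc^[2] r.1) = 2 := by
    have he : (cyc^[2] r.1) = cyc (cyc^[1] r.1) := Function.iterate_succ_apply' cyc 1 r.1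
    rw [he, pow3_cyc _ (cyc_iterate_nondiag r.1 r.2.2 1), h1]
  fin_cases m
  · simpa using h0
  · simpa using h1
  · simpa using h2

/-- non-diagonal triples ≃ Rset × Fin 3 -/
def nondiagEquiv : Rset N × Fin 3 ≃ {t : T3 N // ¬ cyc t = t} where
  toFun p := ⟨cyc^[p.2.1] p.1.1, cyc_iterate_nondiag p.1.1 p.1.2.2 p.2.1⟩
  invFun t := (⟨rep t.1, rep_rep t.1, nondiag_rep t.1 t.2⟩, ⟨pow3 t.1, pow3_lt t.1⟩)
  left_inv p := by
    obtain ⟨r, m⟩ := p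
    have hr : rep (cyc^[m.1] r.1) = r.1 := by rw [rep_iterate, r.2.1]
    have hp : pow3 (cyc^[m.1] r.1) = m.1 := pow3_rset_iterate r m
    exact Prod.ext (Subtype.ext hr) (Fin.ext hp)
  right_inv t := Subtype.ext (cyc_iterate_rep t.1 t.2)

lemma card_rset (N : ℕ) : 3 * Fintype.card (Rset N) = N ^ 3 - N := by
  have h1 : Fintype.card {t : T3 N // ¬ cyc t = t} = Fintype.card (Rset N) * 3 := by
    rw [← Fintype.card_congr (nondiagEquiv (N := N))]
    simp [Fintype.card_prod]
  have h2 : Fintype.card {t : T3 N // cyc t = t} = N := by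
    rw [Fintype.card_congr (diagEquiv (N := N)), Fintype.card_fin]
  have h3 : Fintype.card (T3 N) = N ^ 3 := by
    simp [Fintype.card_prod, Fintype.card_fin]; ring
  have h4 := Fintype.card_subtype_compl (fun t : T3 N => cyc t = t)
  rw [h1, h2, h3] at h4
  omega

end Aux
namespace Aux

variable {N : ℕ}

/-- the triple product -/
def Θ (t : T3 N) : GA N := θ N t.1 * θ N t.2.1 * θ N t.2.2

lemma theta_rel (t : T3 N) : Θ t = jj • Θ (cyc t) := by
  have h := RingQuot.mkAlgHom_rel ℂ (GRel.ternary t.1 t.2.1 t.2.2)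
  simpa [Θ, θ, map_mul, map_smul, cyc] using h

lemma theta_diag (t : T3 N) (h : cyc t = t) : Θ t = 0 := by
  have h1 : Θ t = jj • Θ t := by conv_lhs => rw [theta_rel t, h]
  have h2 : Θ t = algebraMap ℂ (GA N) jj * Θ t := h1.trans (Algebra.smul_def _ _)
  have hne : (1 : ℂ) - jj ≠ 0 := sub_ne_zero.mpr (Ne.symm jj_ne_one)
  have hinv : algebraMap ℂ (GA N) (1 - jj)⁻¹ * (1 - algebraMap ℂ (GA N) jj) = 1 := by
    rw [show (1 : GA N) - algebraMap ℂ (GA N) jj = algebraMap ℂ (GA N) (1 - jj) by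
      rw [map_sub, map_one]]
    rw [← map_mul, inv_mul_cancel₀ hne, map_one]
  calc Θ t = 1 * Θ t := (one_mul _).symm
    _ = (algebraMap ℂ (GA N) (1 - jj)⁻¹ * (1 - algebraMap ℂ (GA N) jj)) * Θ t := by
          rw [hinv]
    _ = algebraMap ℂ (GA N) (1 - jj)⁻¹ * ((1 - algebraMap ℂ (GA N) jj) * Θ t) := by
          rw [mul_assoc]
    _ = algebraMap ℂ (GA N) (1 - jj)⁻¹ * (Θ t - algebraMap ℂ (GA N) jj * Θ t) := by
          rw [sub_mul, one_mul]
    _ = algebraMap ℂ (GA N) (1 - jj)⁻¹ * 0 := by rw [← h2, sub_self]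
    _ = 0 := mul_zero _

lemma theta_rep (t : T3 N) (h : ¬ cyc t = t) :
    jj ^ (3 - pow3 t) • Θ (rep t) = Θ t := by
  rcases trichotomy t h with ⟨h1, h2⟩ | ⟨h1, h2⟩ | ⟨h1, h2⟩ <;> rw [h1, h2]
  · norm_num
    have hj : jj ^ 3 = 1 := jj_pow3
    rw [hj, one_smul]
  · norm_num
    rw [theta_rel t, theta_rel (cyc t), smul_smul, ← pow_two]
  · rw [theta_rel t]
    norm_num

/-- the representation space: a truncated tensor module -/
abbrev BB (N : ℕ) := ℂ × (Fin N → ℂ) × ((Fin N × Fin N) → ℂ) × (Rset N → ℂ)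

/-- left multiplication by `θ i` in the truncated representation -/
def Tmap (i : Fin N) : BB N →ₗ[ℂ] BB N where
  toFun b := (0, fun q => if q = i then b.1 else 0,
              fun pq => if pq.1 = i then b.2.1 pq.2 else 0,
              fun r => ∑ p, ∑ q, b.2.2.1 (p, q) * vv (i, p, q) r)
  map_add' x y := by
    refine Prod.ext (by simp) (Prod.ext ?_ (Prod.ext ?_ ?_)) <;> funext z <;>
      simp [add_mul, Finset.sum_add_distrib] <;> split <;> simp
  map_smul' c x := by
    refine Prod.ext (by simp) (Prod.ext ?_ (Prod.ext ?_ ?_)) <;> funext z <;>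
      simp [Finset.mul_sum, mul_assoc] <;> split <;> simp

lemma Tmap_triple (i k l : Fin N) (b : BB N) :
    (Tmap i (Tmap k (Tmap l b))).2.2.2 = b.1 • vv (i, k, l) := by
  funext r
  simp only [Tmap, LinearMap.coe_mk, AddHom.coe_mk, Pi.smul_apply, smul_eq_mul]
  rw [Finset.sum_eq_single k ?_ ?_]
  · rw [Finset.sum_eq_single l ?_ ?_]
    · simp
    · intro q _ hq; simp [hq]
    · simp
  · intro p _ hp; simp [hp]
  · simp

lemma Trel (i k l : Fin N) :
    (Tmap i ∘ₗ Tmap k ∘ₗ Tmap l : BB N →ₗ[ℂ] BB N) = jj • (Tmap k ∘ₗ Tmap l ∘ₗ Tmap i) := by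
  apply LinearMap.ext
  intro b
  have h4 := Tmap_triple i k l b
  have h4' := Tmap_triple k l i b
  refine Prod.ext (by simp [Tmap]) (Prod.ext ?_ (Prod.ext ?_ ?_))
  · funext q; simp [Tmap]
  · funext pq; simp [Tmap]
  · show (Tmap i (Tmap k (Tmap l b))).2.2.2 = _
    rw [h4]
    have hv : vv (i, k, l) = jj • vv (k, l, i) := vrel (i, k, l)
    rw [hv]
    show b.1 • (jj • vv (k, l, i)) = jj • (Tmap k (Tmap l (Tmap i b))).2.2.2
    rw [h4', smul_comm]

/-- the representation of the free algebra -/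
def phi0 : FreeAlgebra ℂ (Fin N) →ₐ[ℂ] Module.End ℂ (BB N) :=
  FreeAlgebra.lift ℂ Tmap

/-- the representation of `GA N` -/
def phi : GA N →ₐ[ℂ] Module.End ℂ (BB N) :=
  RingQuot.liftAlgHom ℂ ⟨phi0, by
    rintro x y ⟨i, k, l⟩
    simp only [map_mul, map_smul, phi0, FreeAlgebra.lift_ι_apply]
    show Tmap i * Tmap k * Tmap l = jj • (Tmap k * Tmap l * Tmap i)
    have h := Trel i k l
    rw [mul_assoc, mul_assoc]
    exact h⟩

def basept : BB N := (1, 0, 0, 0)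

/-- projection to the grade-3 component -/
def pr3 : GA N →ₗ[ℂ] (Rset N → ℂ) where
  toFun x := ((phi x) basept).2.2.2
  map_add' x y := by simp [map_add]
  map_smul' c x := by simp [map_smul]

lemma phi_theta (i : Fin N) : phi (θ N i) = Tmap i := by
  rw [θ, phi, RingQuot.liftAlgHom_mkAlgHom_apply, phi0, FreeAlgebra.lift_ι_apply]

lemma pr3_theta (t : T3 N) : pr3 (Θ t) = vv t := by
  obtain ⟨i, k, l⟩ := t
  show ((phi (θ N i * θ N k * θ N l)) basept).2.2.2 = _
  rw [map_mul, map_mul, phi_theta, phi_theta, phi_theta]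
  show (Tmap i (Tmap k (Tmap l basept))).2.2.2 = _
  rw [Tmap_triple]
  simp [basept]

/-- the inverse linear map -/
def psi3 : (Rset N → ℂ) →ₗ[ℂ] GA N where
  toFun f := ∑ r : Rset N, f r • Θ r.1
  map_add' f g := by simp [add_smul, Finset.sum_add_distrib]
  map_smul' c f := by simp [smul_smul, Finset.smul_sum]

lemma pr3_psi3 (f : Rset N → ℂ) : pr3 (psi3 f) = f := by
  show pr3 (∑ r : Rset N, f r • Θ r.1) = f
  rw [map_sum]
  funext r'
  simp only [map_smul, pr3_theta, Finset.sum_apply, Pi.smul_apply, vv_rset, smul_eq_mul]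
  rw [Fintype.sum_eq_single r' ?_]
  · simp
  · intro b hb; simp [Ne.symm hb]

lemma psi3_pr3_theta (t : T3 N) : psi3 (pr3 (Θ t)) = Θ t := by
  rw [pr3_theta]
  by_cases h : cyc t = t
  · rw [vv_diag t h, map_zero, theta_diag t h]
  · rw [vv_nondiag t h]
    show (∑ r : Rset N, _ • Θ r.1) = Θ t
    refine Eq.trans (Fintype.sum_eq_single (⟨rep t, rep_rep t, nondiag_rep t h⟩ : Rset N) ?_) ?_
    · intro b hb
      have hne : (b : Rset N).1 ≠ rep t := fun he => hb (Subtype.ext he)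
      simp [hne]
    · simpa using theta_rep t h

end Aux

namespace Aux

variable {N : ℕ}

lemma theta_mem (t : T3 N) :
    Θ t ∈ Submodule.span ℂ {x : GA N | ∃ i k l : Fin N, x = θ N i * θ N k * θ N l} :=
  Submodule.subset_span ⟨t.1, t.2.1, t.2.2, rfl⟩

lemma psi3_mem (f : Rset N → ℂ) :
    psi3 f ∈ Submodule.span ℂ {x : GA N | ∃ i k l : Fin N, x = θ N i * θ N k * θ N l} := by
  refine Submodule.sum_mem _ fun r _ => Submodule.smul_mem _ _ (theta_mem r.1)

lemma psi3_pr3_span (x : GA N)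
    (hx : x ∈ Submodule.span ℂ {x : GA N | ∃ i k l : Fin N, x = θ N i * θ N k * θ N l}) :
    psi3 (pr3 x) = x := by
  induction hx using Submodule.span_induction with
  | mem y h => obtain ⟨i, k, l, rfl⟩ := h; exact psi3_pr3_theta (i, k, l)
  | zero => simp
  | add y z _ _ hy hz => rw [map_add, map_add, hy, hz]
  | smul c y _ hy => rw [map_smul, map_smul, hy]

set_option maxHeartbeats 1000000 in
/-- the span of the triple products is linearly equivalent to `Rset N → ℂ` -/
def spanEquiv (N : ℕ) :
    (Submodule.span ℂ {x : GA N | ∃ i k l : Fin N, x = θ N i * θ N k * θ N l}) ≃ₗ[ℂ]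
      (Rset N → ℂ) :=
  LinearEquiv.ofLinear
    (pr3.comp (Submodule.subtype _))
    (LinearMap.codRestrict _ psi3 psi3_mem)
    (LinearMap.ext fun f => pr3_psi3 f)
    (LinearMap.ext fun x => Subtype.ext (psi3_pr3_span x.1 x.2))

end Aux

/-- the span of products of exactly three generators has
dimension `(N^3 - N)/3` (stated in the division-free form
`3 * dim = N^3 - N`). -/
theorem finrank_span_triple_products (N : ℕ) :
    3 * Module.finrank ℂ
      (Submodule.span ℂ {x : GA N | ∃ i k l : Fin N, x = θ N i * θ N k * θ N l})
      = N ^ 3 - N := by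
  have h1 : Module.finrank ℂ
      (Submodule.span ℂ {x : GA N | ∃ i k l : Fin N, x = θ N i * θ N k * θ N l})
      = Fintype.card (Aux.Rset N) := by
    rw [(Aux.spanEquiv N).finrank_eq, Module.finrank_pi]
  rw [h1]
  exact Aux.card_rset N
end
end

section
/- The inverse of an invertible Z3-matrix of grade 1 is of grade 2, the inverse of an invertible grade-2 Z3-matrix is of grade 1, and the inverse of an invertible grade-0 Z3-matrix is of grade 0. -/
noncomputable section

namespace Z3

/-- Generators: `Sum.inl i` is the grade-1 generator `θ_i`,
`Sum.inr i` is the grade-2 generator `θ̄_i`. -/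
abbrev Gen (N : ℕ) := Fin N ⊕ Fin N

/-- Grade of a generator. -/
def genGrade {N : ℕ} : Gen N → ZMod 3
  | Sum.inl _ => 1
  | Sum.inr _ => 2

/-- Grade of a word in the generators (sum of the grades mod 3). -/
def wGrade {N : ℕ} (w : List (Gen N)) : ZMod 3 := (w.map genGrade).sum

/-- The product in the free algebra of the letters of a word. -/
def wProd {N : ℕ} (w : List (Gen N)) : FreeAlgebra ℂ (Gen N) :=
  (w.map (FreeAlgebra.ι ℂ)).prod

/-- Defining relations of the `ℤ₃`-graded Grassmann algebra: homogeneous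
grade-0 elements are central, and `A Ā = j Ā A` for `A` of grade 1 and `Ā` of
grade 2. -/
inductive Rel (N : ℕ) : FreeAlgebra ℂ (Gen N) → FreeAlgebra ℂ (Gen N) → Prop
  | central (w₁ w₂ : List (Gen N)) (h : wGrade w₁ = 0) :
      Rel N (wProd w₁ * wProd w₂) (wProd w₂ * wProd w₁)
  | comm12 (w₁ w₂ : List (Gen N)) (h₁ : wGrade w₁ = 1) (h₂ : wGrade w₂ = 2) :
      Rel N (wProd w₁ * wProd w₂) (jj • (wProd w₂ * wProd w₁))

/-- The `ℤ₃`-graded Grassmann algebra on `N` grade-1 generators `θ_i` and `N`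
grade-2 generators `θ̄_i`. -/
abbrev G (N : ℕ) := RingQuot (Rel N)

/-- The canonical quotient map. -/
def mk (N : ℕ) : FreeAlgebra ℂ (Gen N) →ₐ[ℂ] G N := RingQuot.mkAlgHom ℂ (Rel N)

/-- The homogeneous component of grade `g`: the span of (classes of) words of
grade `g`. -/
def 𝒢 {N : ℕ} (g : ZMod 3) : Submodule ℂ (G N) :=
  Submodule.span ℂ {x | ∃ w : List (Gen N), wGrade w = g ∧ x = mk N (wProd w)}

/-- The "body" map on the free algebra, sending every generator to `0`. -/
def bodyF (N : ℕ) : FreeAlgebra ℂ (Gen N) →ₐ[ℂ] ℂ :=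
  FreeAlgebra.lift ℂ (fun _ : Gen N => (0 : ℂ))

lemma bodyF_wProd_ne_nil {N : ℕ} (w : List (Gen N)) (hw : w ≠ []) :
    bodyF N (wProd w) = 0 := by
  cases w with
  | nil => exact absurd rfl hw
  | cons a t =>
      simp only [wProd, List.map_cons, List.prod_cons, map_mul, bodyF,
        FreeAlgebra.lift_ι_apply, zero_mul]

lemma wGrade_ne_nil {N : ℕ} {w : List (Gen N)} {g : ZMod 3} (h : wGrade w = g)
    (hg : g ≠ 0) : w ≠ [] := by
  intro e; subst e; simp [wGrade] at h; exact hg h.symm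

/-- The body (augmentation) map of the Grassmann algebra: coefficient of the
unit `I`. -/
def bodyA (N : ℕ) : G N →ₐ[ℂ] ℂ :=
  RingQuot.liftAlgHom ℂ ⟨bodyF N, by
    intro x y h
    cases h with
    | central w₁ w₂ h => simp only [map_mul]; ring
    | comm12 w₁ w₂ h₁ h₂ =>
        have h1 : bodyF N (wProd w₁) = 0 :=
          bodyF_wProd_ne_nil w₁ (wGrade_ne_nil h₁ (by decide))
        simp [map_mul, map_smul, h1]⟩

end Z3

namespace Z3

/-- Index type for `3×3` block matrices with block sizes `n 0, n 1, n 2`. -/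
abbrev Idx (n : Fin 3 → ℕ) := Σ r : Fin 3, Fin (n r)

/-- A `ℤ₃`-matrix: a `3×3` block matrix with Grassmann entries. -/
abbrev ZMat (N : ℕ) (n : Fin 3 → ℕ) := Matrix (Idx n) (Idx n) (G N)

/-- A `ℤ₃`-matrix is homogeneous of grade `g` when the entry in block
position `(r,s)` has Grassmann grade `g + r - s (mod 3)` (equivalently, the
grade of the matrix is the sum mod 3 of the block-position grade `s - r` and
the Grassmann grade of the entries of that block). -/
def MGrade {N : ℕ} {n : Fin 3 → ℕ} (g : ZMod 3) (M : ZMat N n) : Prop :=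
  ∀ p q : Idx n, M p q ∈ 𝒢 (g + (p.1.val : ZMod 3) - (q.1.val : ZMod 3))

/-- Weights of the three diagonal blocks appearing in the `ℤ₃`-trace and in
scalar multiplication: `(1, j^2, j)` raised to suitable powers. -/
def wt : Fin 3 → ZMod 3 := ![0, 2, 1]

/-- The `ℤ₃`-trace of a `ℤ₃`-matrix of grade `g` with diagonal blocks
`A, E, I` is `tr A + j^{2(1-g)} tr E + j^{(1-g)} tr I`. -/
def ztrace {N : ℕ} {n : Fin 3 → ℕ} (g : ZMod 3) (M : ZMat N n) : G N :=
  ∑ p : Idx n, (jj ^ ((wt p.1 * (1 - g)).val)) • M p p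

/-- The diagonal `ℤ₃`-matrix `diag(λ, j^{2∂λ} λ, j^{∂λ} λ)` implementing the
scalar multiplication by a homogeneous Grassmann element `λ` of grade `d`. -/
def lamMat (N : ℕ) (n : Fin 3 → ℕ) (lam : G N) (d : ZMod 3) : ZMat N n :=
  Matrix.diagonal fun p => (jj ^ ((wt p.1 * d).val)) • lam

/-- Left product of a `ℤ₃`-matrix by a homogeneous Grassmann element of
grade `d`. -/
def smulL {N : ℕ} {n : Fin 3 → ℕ} (lam : G N) (d : ZMod 3) (M : ZMat N n) : ZMat N n :=
  lamMat N n lam d * M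

/-- Right product of a `ℤ₃`-matrix by a homogeneous Grassmann element of
grade `d`. -/
def smulR {N : ℕ} {n : Fin 3 → ℕ} (M : ZMat N n) (lam : G N) (d : ZMod 3) : ZMat N n :=
  M * lamMat N n lam d

end Z3

/-!
The grading is the eigenspace decomposition of the automorphism `σ` of the Grassmann algebra that
multiplies each generator of grade `g` by `ω ^ g`, `ω = e^{2πi/3}`. It is well defined because the
defining relations are homogeneous, and since words span the algebra while eigenspaces for distinct
eigenvalues are independent, `𝒢 g` is exactly the `ω ^ g`-eigenspace of `σ`. On matrices,
`Φ M = D⁻¹ σ(M) D` with `D = diag(1, ω, ω²)` is multiplicative, and `M` has grade `g` if and only if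
`Φ M = ω ^ g • M`. Applying `Φ` to `M M' = 1` then gives `Φ M' = ω ^ (-g) • M'`.
-/

lemma ZMod.stdAddChar_ne_zero {m : ℕ} [NeZero m] (a : ZMod m) : stdAddChar a ≠ 0 := by
  rw [stdAddChar_apply]
  exact Circle.coe_ne_zero _

namespace Z3

local notation "χ" => (ZMod.stdAddChar : AddChar (ZMod 3) ℂ)

variable {N : ℕ}

lemma wProd_append (w₁ w₂ : List (Gen N)) : wProd (w₁ ++ w₂) = wProd w₁ * wProd w₂ := by
  simp [wProd]

lemma wProd_cons (a : Gen N) (w : List (Gen N)) :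
    wProd (a :: w) = FreeAlgebra.ι ℂ a * wProd w := by
  simp [wProd]

lemma wGrade_cons (a : Gen N) (w : List (Gen N)) : wGrade (a :: w) = genGrade a + wGrade w := by
  simp [wGrade]

lemma wGrade_append (w₁ w₂ : List (Gen N)) : wGrade (w₁ ++ w₂) = wGrade w₁ + wGrade w₂ := by
  simp [wGrade]

lemma span_words_eq_top :
    Submodule.span ℂ (Set.range fun w : List (Gen N) => mk N (wProd w)) = ⊤ := by
  let W : Submonoid (G N) :=
    { carrier := Set.range fun w : List (Gen N) => mk N (wProd w)
      one_mem' := ⟨[], by simp [wProd]⟩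
      mul_mem' := by
        rintro _ _ ⟨w₁, rfl⟩ ⟨w₂, rfl⟩
        exact ⟨w₁ ++ w₂, by simp only [wProd_append, map_mul]⟩ }
  have hgen : Set.range (mk N ∘ FreeAlgebra.ι ℂ) ⊆ W := by
    rintro _ ⟨x, rfl⟩
    exact ⟨[x], by simp [wProd]⟩
  have hadjoin : Algebra.adjoin ℂ (W : Set (G N)) = ⊤ := by
    refine top_le_iff.mp (le_trans ?_ (Algebra.adjoin_mono hgen))
    rw [Set.range_comp, Algebra.adjoin_image, FreeAlgebra.adjoin_range_ι, Algebra.map_top,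
      (AlgHom.range_eq_top (mk N)).mpr (RingQuot.mkAlgHom_surjective ℂ (Rel N))]
  have := congrArg Subalgebra.toSubmodule hadjoin
  rwa [Algebra.adjoin_eq_span, Submonoid.closure_eq, Algebra.top_toSubmodule] at this

lemma iSup_grade_eq_top : ⨆ g : ZMod 3, (𝒢 g : Submodule ℂ (G N)) = ⊤ := by
  rw [eq_top_iff, ← span_words_eq_top]
  simp only [𝒢, Submodule.iSup_span]
  refine Submodule.span_mono ?_
  rintro _ ⟨w, rfl⟩
  exact Set.mem_iUnion.mpr ⟨wGrade w, w, rfl, rfl⟩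

def sigmaFree (N : ℕ) : FreeAlgebra ℂ (Gen N) →ₐ[ℂ] FreeAlgebra ℂ (Gen N) :=
  FreeAlgebra.lift ℂ fun x => χ (genGrade x) • FreeAlgebra.ι ℂ x

lemma sigmaFree_wProd (w : List (Gen N)) :
    sigmaFree N (wProd w) = χ (wGrade w) • wProd w := by
  induction w with
  | nil => simp [wProd, wGrade]
  | cons a t ih =>
    have hι : sigmaFree N (FreeAlgebra.ι ℂ a) = χ (genGrade a) • FreeAlgebra.ι ℂ a :=
      FreeAlgebra.lift_ι_apply _ _
    rw [wProd_cons, map_mul, hι, ih, wGrade_cons, AddChar.map_add_eq_mul, smul_mul_smul_comm]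

lemma sigmaFree_wProd_mul (w₁ w₂ : List (Gen N)) :
    sigmaFree N (wProd w₁ * wProd w₂) = χ (wGrade w₁ + wGrade w₂) • (wProd w₁ * wProd w₂) := by
  rw [← wProd_append, sigmaFree_wProd, wGrade_append]

lemma Rel.sigmaFree_eq_smul {x y : FreeAlgebra ℂ (Gen N)} (h : Rel N x y) :
    ∃ c : ℂ, sigmaFree N x = c • x ∧ sigmaFree N y = c • y := by
  cases h with
  | central w₁ w₂ _ =>
    exact ⟨_, sigmaFree_wProd_mul w₁ w₂, by rw [sigmaFree_wProd_mul, add_comm]⟩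
  | comm12 w₁ w₂ _ _ =>
    exact ⟨_, sigmaFree_wProd_mul w₁ w₂, by
      rw [map_smul, sigmaFree_wProd_mul, add_comm, smul_comm]⟩

def sigma (N : ℕ) : G N →ₐ[ℂ] G N :=
  RingQuot.liftAlgHom ℂ ⟨(mk N).comp (sigmaFree N), fun x y h => by
    obtain ⟨c, hx, hy⟩ := h.sigmaFree_eq_smul
    rw [AlgHom.comp_apply, AlgHom.comp_apply, hx, hy, map_smul, map_smul, mk,
      RingQuot.mkAlgHom_rel ℂ h]⟩

lemma sigma_mk_wProd (w : List (Gen N)) :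
    sigma N (mk N (wProd w)) = χ (wGrade w) • mk N (wProd w) := by
  simp only [sigma, mk, RingQuot.liftAlgHom_mkAlgHom_apply, AlgHom.comp_apply, sigmaFree_wProd,
    map_smul]

lemma grade_le_eigenspace (g : ZMod 3) :
    𝒢 g ≤ Module.End.eigenspace (sigma N).toLinearMap (χ g) := by
  refine Submodule.span_le.mpr ?_
  rintro _ ⟨w, rfl, rfl⟩
  exact Module.End.mem_eigenspace_iff.mpr (sigma_mk_wProd w)

lemma grade_eq_eigenspace (g : ZMod 3) :
    𝒢 g = Module.End.eigenspace (sigma N).toLinearMap (χ g) := by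
  have hindep := (Module.End.eigenspaces_iSupIndep (sigma N).toLinearMap).comp
    (ZMod.injective_stdAddChar (N := 3))
  exact congrFun ((hindep.le_iff_eq_of_iSup_eq_top iSup_grade_eq_top).mp grade_le_eigenspace) g

lemma mem_grade_iff {g : ZMod 3} {x : G N} : x ∈ 𝒢 g ↔ sigma N x = χ g • x := by
  rw [grade_eq_eigenspace, Module.End.mem_eigenspace_iff, AlgHom.toLinearMap_apply]

variable {n : Fin 3 → ℕ}

def sigmaMatrix (M : ZMat N n) : ZMat N n :=
  Matrix.of fun p q => χ ((q.1.val : ZMod 3) - p.1.val) • sigma N (M p q)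

lemma sigmaMatrix_one : sigmaMatrix (1 : ZMat N n) = 1 := by
  ext p q
  by_cases h : p = q
  · subst h
    simp [sigmaMatrix]
  · simp [sigmaMatrix, Matrix.one_apply_ne h]

lemma sigmaMatrix_mul (M M' : ZMat N n) :
    sigmaMatrix (M * M') = sigmaMatrix M * sigmaMatrix M' := by
  ext p q
  simp only [sigmaMatrix, Matrix.of_apply, Matrix.mul_apply, map_sum, map_mul, Finset.smul_sum,
    smul_mul_smul_comm, ← AddChar.map_add_eq_mul, sub_add_sub_cancel']

lemma mGrade_iff_sigmaMatrix_eq {g : ZMod 3} {M : ZMat N n} :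
    MGrade g M ↔ sigmaMatrix M = χ g • M := by
  rw [MGrade, ← Matrix.ext_iff]
  refine forall₂_congr fun p q => ?_
  have hg : χ g = χ ((q.1.val : ZMod 3) - p.1.val) * χ (g + p.1.val - q.1.val) := by
    rw [← AddChar.map_add_eq_mul]
    ring_nf
  rw [mem_grade_iff, sigmaMatrix, Matrix.of_apply, Matrix.smul_apply, hg, ← smul_smul,
    smul_right_inj (ZMod.stdAddChar_ne_zero _)]

lemma MGrade.of_mul_eq_one {g : ZMod 3} {M M' : ZMat N n} (hM : MGrade g M)
    (h : M * M' = 1) (h' : M' * M = 1) : MGrade (-g) M' := by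
  rw [mGrade_iff_sigmaMatrix_eq] at hM ⊢
  have hΦ : sigmaMatrix M * sigmaMatrix M' = 1 := by rw [← sigmaMatrix_mul, h, sigmaMatrix_one]
  calc sigmaMatrix M' = M' * M * sigmaMatrix M' := by rw [h', one_mul]
    _ = M' * (χ (-g) • sigmaMatrix M) * sigmaMatrix M' := by
      rw [hM, smul_smul, ← AddChar.map_add_eq_mul, neg_add_cancel, AddChar.map_zero_eq_one,
        one_smul]
    _ = χ (-g) • M' := by rw [mul_smul_comm, smul_mul_assoc, mul_assoc, hΦ, mul_one]

end Z3

/-- the inverse of an invertible grade-1 `ℤ₃`-matrix is of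
grade 2, the inverse of an invertible grade-2 `ℤ₃`-matrix is of grade 1, and
the inverse of an invertible grade-0 `ℤ₃`-matrix is of grade 0. -/
theorem grade_of_inverse (N : ℕ) (n : Fin 3 → ℕ) :
    (∀ M M' : Z3.ZMat N n, Z3.MGrade 1 M → M * M' = 1 → M' * M = 1 → Z3.MGrade 2 M') ∧
    (∀ M M' : Z3.ZMat N n, Z3.MGrade 2 M → M * M' = 1 → M' * M = 1 → Z3.MGrade 1 M') ∧
    (∀ M M' : Z3.ZMat N n, Z3.MGrade 0 M → M * M' = 1 → M' * M = 1 → Z3.MGrade 0 M') :=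
  ⟨fun _ _ hM => hM.of_mul_eq_one, fun _ _ hM => hM.of_mul_eq_one,
    fun _ _ hM => hM.of_mul_eq_one⟩
end
end

section
/- If M and N are homogeneous Z3-matrices, with M of grade 1 and N of grade 2, then tr_{Z3}(MN) = j · tr_{Z3}(NM), where j = e^{2πi/3}. -/
noncomputable section

namespace Z3Aux

open Z3

lemma jj_cube : jj ^ 3 = 1 := by
  rw [jj, ← Complex.exp_nat_mul]
  rw [show (3 : ℕ) * (2 * Real.pi * Complex.I / 3) = 2 * Real.pi * Complex.I by push_cast; ring]
  exact Complex.exp_two_pi_mul_I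

lemma jj_pow_mod (m : ℕ) : jj ^ m = jj ^ (m % 3) := by
  conv_lhs => rw [← Nat.div_add_mod m 3, pow_add, pow_mul, jj_cube, one_pow, one_mul]

lemma jj_pow_congr {m k : ℕ} (h : (m : ZMod 3) = (k : ZMod 3)) : jj ^ m = jj ^ k := by
  rw [jj_pow_mod m, jj_pow_mod k]
  have := (ZMod.natCast_eq_natCast_iff' m k 3).mp h
  rw [this]

lemma tri : ∀ x : ZMod 3, x = 0 ∨ x = 1 ∨ x = 2 := by decide

lemma word_comm {N : ℕ} (w₁ w₂ : List (Gen N))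
    (hab : wGrade w₁ + wGrade w₂ = 0) :
    mk N (wProd w₁) * mk N (wProd w₂)
      = jj ^ (wGrade w₁).val • (mk N (wProd w₂) * mk N (wProd w₁)) := by
  simp only [mk]
  rcases tri (wGrade w₁) with ha | ha | ha <;>
    rcases tri (wGrade w₂) with hb | hb | hb <;>
      first
        | (exfalso; rw [ha, hb] at hab; revert hab; decide)
        | skip
  · -- a = 0, b = 0
    have h := RingQuot.mkAlgHom_rel ℂ (Rel.central w₁ w₂ ha)
    rw [map_mul, map_mul] at h
    rw [ha]
    simpa using h
  · -- a = 1, b = 2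
    have h := RingQuot.mkAlgHom_rel ℂ (Rel.comm12 w₁ w₂ ha hb)
    rw [map_smul, map_mul, map_mul] at h
    rw [ha, show (ZMod.val (1 : ZMod 3)) = 1 by decide]
    simpa using h
  · -- a = 2, b = 1
    have h := RingQuot.mkAlgHom_rel ℂ (Rel.comm12 w₂ w₁ hb ha)
    rw [map_smul, map_mul, map_mul] at h
    rw [ha, show (ZMod.val (2 : ZMod 3)) = 2 by decide, h, smul_smul]
    rw [show (jj ^ 2 * jj : ℂ) = jj ^ 3 by ring, jj_cube, one_smul]

lemma comm_grade {N : ℕ} {a b : ZMod 3} (hab : a + b = 0) {x y : G N}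
    (hx : x ∈ 𝒢 a) (hy : y ∈ 𝒢 b) :
    x * y = jj ^ a.val • (y * x) := by
  induction hx using Submodule.span_induction with
  | mem x hxs =>
    obtain ⟨w₁, hw₁, rfl⟩ := hxs
    induction hy using Submodule.span_induction with
    | mem y hys =>
      obtain ⟨w₂, hw₂, rfl⟩ := hys
      rw [← hw₁]
      exact word_comm w₁ w₂ (by rw [hw₁, hw₂, hab])
    | zero => simp
    | add y z hy hz ihy ihz => rw [mul_add, ihy, ihz, add_mul, smul_add]
    | smul c y hy ih => rw [mul_smul_comm, ih, smul_mul_assoc, smul_comm]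
  | zero => simp
  | add x z hx hz ihx ihz => rw [add_mul, ihx, ihz, mul_add, smul_add]
  | smul c x hx ih => rw [smul_mul_assoc, ih, mul_smul_comm, smul_comm]

end Z3Aux

/-- if `M` is a homogeneous `ℤ₃`-matrix of grade 1 and `N` one
of grade 2, then `tr_{ℤ₃}(MN) = j · tr_{ℤ₃}(NM)` (the products being of
grade 0). -/
theorem ztrace_mul_grade_one_two (N : ℕ) (n : Fin 3 → ℕ)
    (M P : Z3.ZMat N n) (hM : Z3.MGrade 1 M) (hP : Z3.MGrade 2 P) :
    Z3.ztrace 0 (M * P) = jj • Z3.ztrace 0 (P * M) := by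
  classical
  unfold Z3.ztrace
  rw [Finset.smul_sum]
  rw [show ((Finset.univ : Finset (Z3.Idx n)).sum fun p =>
        jj ^ ((Z3.wt p.1 * (1 - 0)).val) • (M * P) p p)
      = ∑ p : Z3.Idx n, ∑ q : Z3.Idx n,
          jj ^ ((Z3.wt p.1 * (1 - 0)).val) • (M p q * P q p) by
    refine Finset.sum_congr rfl fun p _ => ?_
    rw [Matrix.mul_apply, Finset.smul_sum]]
  rw [Finset.sum_comm]
  refine Finset.sum_congr rfl fun q _ => ?_
  rw [Matrix.mul_apply, Finset.smul_sum, Finset.smul_sum]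
  refine Finset.sum_congr rfl fun p _ => ?_
  have hcomm := Z3Aux.comm_grade (a := 1 + (p.1.val : ZMod 3) - (q.1.val : ZMod 3))
    (b := 2 + (q.1.val : ZMod 3) - (p.1.val : ZMod 3))
    (by ring_nf; decide) (hM p q) (hP q p)
  rw [hcomm, smul_smul, smul_smul, ← pow_add,
    show (jj * jj ^ ((Z3.wt q.1 * (1 - 0)).val) : ℂ)
      = jj ^ (1 + (Z3.wt q.1 * (1 - 0)).val) by rw [pow_add, pow_one]]
  congr 1
  apply Z3Aux.jj_pow_congr
  push_cast [ZMod.natCast_val, ZMod.cast_id]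
  have hw : ∀ r : Fin 3, Z3.wt r + (r.val : ZMod 3) = 0 := by decide
  have h1 := hw p.1
  have h2 := hw q.1
  ring_nf
  ring_nf at h1 h2
  linear_combination h1 - h2
end
end
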